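/- For α > 1, σ > 0 the function g(ρ) = (1/(α-1)) · log( (α/(2α-1)) exp((α-1)ρ/σ) + ((α-1)/(2α-1)) exp(-αρ/σ) ) is monotonically non-decreasing in ρ on [0, ∞), satisfies g(0) = 0, and for fixed ρ > 0 is monotonically non-increasing in σ. -/

import Mathlib

open Real

/-- The shifted-Laplace Rényi divergence `g_α(σ, ρ)`. -/
noncomputable def gLap (α σ ρ : ℝ) : ℝ :=
  (1 / (α - 1)) * Real.log
    ((α / (2 * α - 1)) * Real.exp ((α - 1) * ρ / σ) +
      ((α - 1) / (2 * α - 1)) * Real.exp (-α * ρ / σ))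

private lemma hpos (α : ℝ) (hα : 1 < α) (t : ℝ) :
    0 < (α / (2 * α - 1)) * Real.exp ((α - 1) * t) +
      ((α - 1) / (2 * α - 1)) * Real.exp (-α * t) := by
  have h2 : 0 < 2 * α - 1 := by linarith
  have h0 : 0 < α := by linarith
  have h1 : 0 < α - 1 := by linarith
  positivity

private lemma hmono (α : ℝ) (hα : 1 < α) :
    MonotoneOn (fun t : ℝ => (α / (2 * α - 1)) * Real.exp ((α - 1) * t) +
      ((α - 1) / (2 * α - 1)) * Real.exp (-α * t)) (Set.Ici 0) := by
  have h2 : 0 < 2 * α - 1 := by linarith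
  have hd : ∀ t : ℝ, HasDerivAt (fun t : ℝ => (α / (2 * α - 1)) * Real.exp ((α - 1) * t) +
      ((α - 1) / (2 * α - 1)) * Real.exp (-α * t))
      ((α / (2 * α - 1)) * (Real.exp ((α - 1) * t) * (α - 1)) +
       ((α - 1) / (2 * α - 1)) * (Real.exp (-α * t) * (-α))) t := by
    intro t
    have := (((hasDerivAt_id t).const_mul (α - 1)).exp.const_mul (α / (2 * α - 1))).add
      (((hasDerivAt_id t).const_mul (-α)).exp.const_mul ((α - 1) / (2 * α - 1)))
    exact this.congr_deriv (by simp only [id_eq, id, mul_one])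
  apply monotoneOn_of_deriv_nonneg (convex_Ici 0)
  · exact (Continuous.continuousOn (by continuity))
  · intro t _
    exact ((hd t).differentiableAt).differentiableWithinAt
  · intro t ht
    rw [interior_Ici] at ht
    rw [(hd t).deriv]
    have hexp : Real.exp (-α * t) ≤ Real.exp ((α - 1) * t) := by
      apply Real.exp_le_exp.mpr
      nlinarith [(Set.mem_Ioi.mp ht).le]
    have h0 : 0 < α := by linarith
    have h1 : (0:ℝ) < α - 1 := by linarith
    have key : (α / (2 * α - 1)) * (Real.exp ((α - 1) * t) * (α - 1)) +
        ((α - 1) / (2 * α - 1)) * (Real.exp (-α * t) * (-α)) =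
        (α * (α - 1) / (2 * α - 1)) * (Real.exp ((α - 1) * t) - Real.exp (-α * t)) := by
      field_simp; ring
    rw [key]
    have : 0 ≤ α * (α - 1) / (2 * α - 1) := by positivity
    nlinarith

private lemma gLap_eq (α σ ρ : ℝ) (hσ : σ ≠ 0) :
    gLap α σ ρ = (1 / (α - 1)) * Real.log
      ((α / (2 * α - 1)) * Real.exp ((α - 1) * (ρ / σ)) +
        ((α - 1) / (2 * α - 1)) * Real.exp (-α * (ρ / σ))) := by
  rw [gLap, mul_div_assoc, mul_div_assoc]

/-- `g_α(σ, ρ)` is non-decreasing in `ρ` on `[0, ∞)`, vanishes at `ρ = 0`, and is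
non-increasing in `σ` on `(0, ∞)` for fixed `ρ > 0`. -/
theorem stmt11 (α : ℝ) (hα : 1 < α) :
    (∀ σ : ℝ, 0 < σ → MonotoneOn (fun ρ => gLap α σ ρ) (Set.Ici 0)) ∧
    (∀ σ : ℝ, 0 < σ → gLap α σ 0 = 0) ∧
    (∀ ρ : ℝ, 0 < ρ → AntitoneOn (fun σ => gLap α σ ρ) (Set.Ioi 0)) := by
  have hα1 : 0 ≤ 1 / (α - 1) := by
    have : (0:ℝ) < α - 1 := by linarith
    positivity
  refine ⟨?_, ?_, ?_⟩
  · intro σ hσ ρ₁ h1 ρ₂ h2 hle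
    simp only
    rw [gLap_eq α σ ρ₁ hσ.ne', gLap_eq α σ ρ₂ hσ.ne']
    apply mul_le_mul_of_nonneg_left _ hα1
    apply Real.log_le_log (hpos α hα _)
    exact hmono α hα (Set.mem_Ici.mpr (div_nonneg h1 hσ.le))
      (Set.mem_Ici.mpr (div_nonneg h2 hσ.le)) (by gcongr)
  · intro σ hσ
    have h2 : (2 * α - 1) ≠ 0 := by intro h; nlinarith
    have : (α / (2 * α - 1)) + ((α - 1) / (2 * α - 1)) = 1 := by rw [← add_div, div_eq_one_iff_eq h2]; ring
    simp [gLap, this]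
  · intro ρ hρ σ₁ h1 σ₂ h2 hle
    simp only
    rw [gLap_eq α σ₁ ρ (ne_of_gt h1), gLap_eq α σ₂ ρ (ne_of_gt h2)]
    apply mul_le_mul_of_nonneg_left _ hα1
    apply Real.log_le_log (hpos α hα _)
    rw [Set.mem_Ioi] at h1 h2
    apply hmono α hα (Set.mem_Ici.mpr (div_nonneg hρ.le h2.le))
      (Set.mem_Ici.mpr (div_nonneg hρ.le h1.le))
    exact div_le_div_of_nonneg_left hρ.le h1 hle
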